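/- A sequence X : ℕ → Bool is infinitely often anti-complex (for every computable order f, K(X↾f(n)) ≤ n for infinitely many n) if and only if for every computable order f, K(X↾n) ≤ f(n) for infinitely many n. -/

import Mathlib

open Filter

/-- The length-`n` initial segment of an infinite binary sequence, as a list. -/
def strTake (X : ℕ → Bool) (n : ℕ) : List Bool := (List.range n).map X

/-- A computable order: non-decreasing, unbounded, computable, with value 0 at 0. -/
def ComputableOrder (f : ℕ → ℕ) : Prop :=
  Computable f ∧ Monotone f ∧ (∀ m, ∃ n, m ≤ f n) ∧ f 0 = 0

/-- A prefix-free machine: a partial computable map on binary strings whose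
domain is prefix-free. -/
def IsPrefixFreeMachine (U : List Bool →. List Bool) : Prop :=
  Partrec U ∧ ∀ p q : List Bool, (U p).Dom → (U q).Dom → p <+: q → p = q

/-- A universal (optimal) prefix-free machine. -/
def IsUniversalPFM (U : List Bool →. List Bool) : Prop :=
  IsPrefixFreeMachine U ∧ ∀ V : List Bool →. List Bool, IsPrefixFreeMachine V →
    ∃ c : ℕ, ∀ p τ, τ ∈ V p → ∃ q : List Bool, τ ∈ U q ∧ q.length ≤ p.length + c

/-- Prefix-free Kolmogorov complexity with respect to the machine `U`:
the length of a shortest `U`-program for `σ`. -/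
noncomputable def K (U : List Bool →. List Bool) (σ : List Bool) : ℕ :=
  sInf {n | ∃ p : List Bool, p.length = n ∧ σ ∈ U p}

/-! The easy direction applies the hypothesis to the inverse order `f⁻¹`: a short description of
`X ↾ f⁻¹(n)` is one of `X ↾ k` with `n ≤ f k`. For the converse, let `r m` be the largest `k` with
`f k ≤ m`. Truncating the output of `U` to length `f (r |σ|)` is a computable operation, so
`K(X ↾ f(r m)) ≤ K(X ↾ m) + c`, and the hypothesis for the order `m ↦ r m - c` (shifted to vanish
at `0`) makes the right-hand side at most `r m` infinitely often. -/

noncomputable def orderInv (f : ℕ → ℕ) (n : ℕ) : ℕ := sInf {k | n ≤ f k}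

/-- The largest `k` with `f k ≤ m`, when `f 0 = 0`. -/
noncomputable def orderInvFloor (f : ℕ → ℕ) (m : ℕ) : ℕ := orderInv f (m + 1) - 1

section OrderInverse

variable {f : ℕ → ℕ}

theorem ComputableOrder.tendsto_atTop (hf : ComputableOrder f) : Tendsto f atTop atTop :=
  tendsto_atTop_atTop_of_monotone hf.2.1 hf.2.2.1

theorem gc_orderInv (hmono : Monotone f) (hunb : ∀ n, ∃ k, n ≤ f k) :
    GaloisConnection (orderInv f) f := fun n _ =>
  ⟨fun h => le_trans (Nat.sInf_mem (s := {k | n ≤ f k}) (hunb n)) (hmono h),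
    fun h => Nat.sInf_le h⟩

theorem gc_orderInvFloor (hmono : Monotone f) (hunb : ∀ n, ∃ k, n ≤ f k) (hf0 : f 0 = 0) :
    GaloisConnection f (orderInvFloor f) := fun k m => by
  have gc := gc_orderInv hmono hunb
  have hpos : orderInv f (m + 1) ≠ 0 := fun h => by
    have := (gc (m + 1) 0).1 h.le
    omega
  have := gc (m + 1) k
  unfold orderInvFloor
  omega

theorem computable_orderInv (hf : Computable f) (hunb : ∀ n, ∃ k, n ≤ f k) :
    Computable (orderInv f) := by
  have hle : ComputablePred fun p : ℕ × ℕ => p.1 ≤ f p.2 :=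
    ⟨inferInstance, (Primrec.nat_le.decide.to_comp.comp Computable.fst (hf.comp Computable.snd))⟩
  refine (Computable.find hle hunb).of_eq fun n => (Nat.find_eq_iff _).2
    ⟨Nat.sInf_mem (hunb n), fun _ hk => Nat.notMem_of_lt_sInf (s := {k | n ≤ f k}) hk⟩

theorem ComputableOrder.orderInv (hf : ComputableOrder f) : ComputableOrder (orderInv f) := by
  obtain ⟨hfc, hmono, hunb, -⟩ := hf
  have gc := gc_orderInv hmono hunb
  refine ⟨computable_orderInv hfc hunb, gc.monotone_l, fun m => ⟨f m + 1, ?_⟩,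
    Nat.le_zero.1 ((gc 0 0).2 (Nat.zero_le _))⟩
  by_contra! h
  have := (gc _ _).1 h.le
  have := hmono h.le
  omega

theorem computable_orderInvFloor (hf : Computable f) (hunb : ∀ n, ∃ k, n ≤ f k) :
    Computable (orderInvFloor f) :=
  Primrec.nat_sub.to_comp.comp ((computable_orderInv hf hunb).comp Computable.succ)
    (Computable.const 1)

end OrderInverse

theorem computableOrder_sub_const {g : ℕ → ℕ} (hc : Computable g) (hmono : Monotone g)
    (hunb : ∀ m, ∃ n, m ≤ g n) (c : ℕ) : ComputableOrder fun n => g n - (g 0 + c) := by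
  refine ⟨Primrec.nat_sub.to_comp.comp hc (Computable.const _),
    fun _ _ hab => Nat.sub_le_sub_right (hmono hab) _, fun m => ?_,
    Nat.sub_eq_zero_of_le (Nat.le_add_right _ _)⟩
  obtain ⟨n, hn⟩ := hunb (m + (g 0 + c))
  exact ⟨n, show m ≤ g n - (g 0 + c) by omega⟩

theorem length_strTake (X : ℕ → Bool) (n : ℕ) : (strTake X n).length = n := by
  simp [strTake]

theorem strTake_take (X : ℕ → Bool) (k n : ℕ) :
    (strTake X n).take k = strTake X (min k n) := by
  simp only [strTake, ← List.map_take, List.take_range]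

section Complexity

variable {U : List Bool →. List Bool}

theorem K_le_length (σ : List Bool) {p : List Bool} (h : σ ∈ U p) : K U σ ≤ p.length :=
  Nat.sInf_le ⟨p, rfl, h⟩

theorem IsUniversalPFM.exists_mem (hU : IsUniversalPFM U) (σ : List Bool) : ∃ p, σ ∈ U p := by
  let V : List Bool →. List Bool := fun p => if p = [] then Part.some σ else Part.none
  have hV : IsPrefixFreeMachine V := by
    refine ⟨?_, fun p q hp hq _ => ?_⟩
    · refine (Computable.ofOption (f := fun p : List Bool => if p = [] then some σ else none)
        (Primrec.ite (Primrec.eq.comp Primrec.id (Primrec.const [])) (Primrec.const _)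
          (Primrec.const none)).to_comp).of_eq fun p => ?_
      by_cases h : p = [] <;> simp [h, V]
    · by_cases h : p = [] <;> by_cases h' : q = [] <;> simp_all [V]
  obtain ⟨c, hc⟩ := hU.2 V hV
  obtain ⟨q, hq, -⟩ := hc [] σ (by simp [V])
  exact ⟨q, hq⟩

theorem IsUniversalPFM.exists_length_eq_K (hU : IsUniversalPFM U) (σ : List Bool) :
    ∃ p, p.length = K U σ ∧ σ ∈ U p := by
  obtain ⟨p, hp⟩ := hU.exists_mem σ
  exact Nat.sInf_mem (s := {n | ∃ p : List Bool, p.length = n ∧ σ ∈ U p}) ⟨p.length, p, rfl, hp⟩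

theorem IsUniversalPFM.exists_K_comp_le (hU : IsUniversalPFM U) {g : List Bool → List Bool}
    (hg : Computable g) : ∃ c, ∀ σ, K U (g σ) ≤ K U σ + c := by
  let V : List Bool →. List Bool := fun p => (U p).map g
  have hV : IsPrefixFreeMachine V :=
    ⟨hU.1.1.map (hg.comp Computable.snd).to₂, hU.1.2⟩
  obtain ⟨c, hc⟩ := hU.2 V hV
  refine ⟨c, fun σ => ?_⟩
  obtain ⟨p, hpK, hp⟩ := hU.exists_length_eq_K σ
  obtain ⟨q, hq, hqp⟩ := hc p (g σ) (Part.mem_map g hp)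
  exact (K_le_length _ hq).trans (hpK ▸ hqp)

theorem IsUniversalPFM.frequently_K_strTake_order_le (hU : IsUniversalPFM U) {X : ℕ → Bool}
    {f : ℕ → ℕ} (hf : ComputableOrder f)
    (h : ∀ g, ComputableOrder g → ∃ᶠ n in atTop, K U (strTake X n) ≤ g n) :
    ∃ᶠ n in atTop, K U (strTake X (f n)) ≤ n := by
  obtain ⟨hfc, hmono, hunb, hf0⟩ := hf
  set r := orderInvFloor f
  have gc := gc_orderInvFloor hmono hunb hf0
  have hr : Computable r := computable_orderInvFloor hfc hunb
  obtain ⟨c, hc⟩ := hU.exists_K_comp_le (g := fun σ => σ.take (f (r σ.length)))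
    (Primrec.list_take.to_comp.comp (hfc.comp (hr.comp Computable.list_length)) Computable.id)
  have hr_unb : ∀ m, ∃ n, m ≤ r n := fun m => ⟨f m, gc.le_u_l m⟩
  have hr_tendsto := tendsto_atTop_atTop_of_monotone gc.monotone_u hr_unb
  refine hr_tendsto.frequently_map r
    (p := fun m => K U (strTake X m) ≤ r m - (r 0 + c) ∧ r 0 + c ≤ r m)
    (fun m ⟨hm, hm_large⟩ => ?_)
    ((h _ (computableOrder_sub_const hr gc.monotone_u hr_unb c)).and_eventually
      (hr_tendsto.eventually_ge_atTop (r 0 + c)))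
  calc K U (strTake X (f (r m)))
      = K U ((strTake X m).take (f (r (strTake X m).length))) := by
        rw [length_strTake, strTake_take, min_eq_left (gc.l_u_le m)]
    _ ≤ K U (strTake X m) + c := hc _
    _ ≤ r m := by omega

end Complexity

theorem stmt14 (U : List Bool →. List Bool) (hU : IsUniversalPFM U) (X : ℕ → Bool) :
    (∀ f, ComputableOrder f → ∃ᶠ n in atTop, K U (strTake X (f n)) ≤ n) ↔
      (∀ f, ComputableOrder f → ∃ᶠ n in atTop, K U (strTake X n) ≤ f n) := by
  refine ⟨fun h f hf => ?_, fun h f hf => hU.frequently_K_strTake_order_le hf h⟩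
  have gc := gc_orderInv hf.2.1 hf.2.2.1
  exact hf.orderInv.tendsto_atTop.frequently_map _ (fun n hn => hn.trans (gc.le_u_l n))
    (h _ hf.orderInv)
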